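/- arXiv:1007.3910 — 2 statements merged into one kernel-verified Lean document; each statement's English description precedes it below -/
import Mathlib

section
/- Let μ be a probability measure on ℝ with μ([0,∞)) = 1 and mean a = ∫ x dμ(x) satisfying 0 < a < ∞, let μ* denote its size-biased measure, and suppose there exists a probability measure ν on ℝ with ν([0,∞)) = 1 such that μ* = μ ∗ ν. Then the characteristic function φ of μ admits the Lévy representation φ(u) = exp( a · ∫_{[0,∞)} k(u,y) dν(y) ) for all real u, where k(u,y) = (e^{iuy} − 1)/y for y > 0 and k(u,0) = iu. In particular the Lévy measure in this representation is a times the distribution ν of the increment. -/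
open MeasureTheory

/-- The size-biased measure of `μ`: `dμ*(x) = (x / ∫ y dμ(y)) dμ(x)`. -/
noncomputable def sizeBiased (μ : Measure ℝ) : Measure ℝ :=
  μ.withDensity (fun x => ENNReal.ofReal (x / ∫ y, y ∂μ))

/-- Convolution of two measures on ℝ: pushforward of the product under addition. -/
noncomputable def mconv (μ ν : Measure ℝ) : Measure ℝ :=
  Measure.map (fun p : ℝ × ℝ => p.1 + p.2) (μ.prod ν)

/-- The characteristic function `φ(u) = ∫ e^{iux} dμ(x)`. -/
noncomputable def charFn (μ : Measure ℝ) (u : ℝ) : ℂ :=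
  ∫ x, Complex.exp (Complex.I * u * x) ∂μ

/-- The Lévy kernel `k(u,y) = (e^{iuy} - 1)/y` for `y ≠ 0`, with `k(u,0) = iu`. -/
noncomputable def levyKernel (u y : ℝ) : ℂ :=
  if y = 0 then Complex.I * u else (Complex.exp (Complex.I * u * y) - 1) / y

/-!
Differentiating under the integral, `φ'(u) = i ∫ x e^{iux} dμ = i a φ_{μ*}(u)`, and the
hypothesis `μ* = μ ∗ ν` turns this into the linear ODE `φ' = i a ψ φ`, where `ψ` is the
characteristic function of `ν`. Since `∂ᵤ k(u,y) = i e^{iuy}`, the function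
`G(u) = ∫ k(u,y) dν(y)` satisfies `G' = i ψ` and `G(0) = 0`, so `φ · exp(-a G)` has zero
derivative and equals its value `1` at `0`.
-/

open Complex

lemma charFn_eq_charFun (μ : Measure ℝ) : charFn μ = charFun μ := by
  ext u
  simp only [charFn, charFun_apply_real]
  congr 1 with x
  ring_nf

lemma mconv_eq_conv (μ ν : Measure ℝ) : mconv μ ν = μ ∗ ν := rfl

lemma integral_sizeBiased {E : Type*} [NormedAddCommGroup E] [NormedSpace ℝ E]
    {μ : Measure ℝ} (hμ : ∀ᵐ x ∂μ, 0 ≤ x) (g : ℝ → E) :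
    ∫ x, g x ∂sizeBiased μ = (∫ x, x ∂μ)⁻¹ • ∫ x, x • g x ∂μ := by
  have hmean : 0 ≤ ∫ x, x ∂μ := integral_nonneg_of_ae hμ
  rw [sizeBiased, integral_withDensity_eq_integral_toReal_smul (by fun_prop)
    (ae_of_all _ fun _ => ENNReal.ofReal_lt_top), ← integral_smul]
  refine integral_congr_ae ?_
  filter_upwards [hμ] with x hx
  rw [ENNReal.toReal_ofReal (div_nonneg hx hmean), smul_smul, div_eq_inv_mul]

lemma hasDerivAt_charFun {μ : Measure ℝ} [IsFiniteMeasure μ] (hint : Integrable id μ)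
    (t : ℝ) :
    HasDerivAt (charFun μ) (I * ∫ x, x * exp (t * x * I) ∂μ) t := by
  have hμ₁ : MemLp id 1 μ := memLp_one_iff_integrable.mpr hint
  have hdiff : Differentiable ℝ (charFun μ) :=
    (contDiff_charFun (n := 1) (by exact_mod_cast hμ₁)).differentiable one_ne_zero
  have := iteratedDeriv_charFun (t := t) (n := 1) (by exact_mod_cast hμ₁)
  rw [iteratedDeriv_one] at this
  simpa [this] using (hdiff t).hasDerivAt

lemma hasDerivAt_charFun_sizeBiased {μ : Measure ℝ} [IsFiniteMeasure μ]
    (hμ : ∀ᵐ x ∂μ, 0 ≤ x) (hint : Integrable id μ) (hmean : ∫ x, x ∂μ ≠ 0)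
    (t : ℝ) :
    HasDerivAt (charFun μ) (I * (∫ x, x ∂μ) * charFun (sizeBiased μ) t) t := by
  convert hasDerivAt_charFun hint t using 1
  simp_rw [charFun_apply_real, integral_sizeBiased hμ, Complex.real_smul, Complex.ofReal_inv]
  rw [mul_assoc I, mul_inv_cancel_left₀ (by exact_mod_cast hmean)]

lemma levyKernel_zero_left (y : ℝ) : levyKernel 0 y = 0 := by
  by_cases hy : y = 0 <;> simp [levyKernel, hy]

lemma norm_levyKernel_le (u y : ℝ) : ‖levyKernel u y‖ ≤ |u| := by
  rw [levyKernel]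
  split_ifs with hy
  · simp
  · rw [norm_div, div_le_iff₀ (by simpa using hy), Complex.norm_real, Real.norm_eq_abs,
      ← abs_mul, ← Real.norm_eq_abs]
    simpa [mul_assoc] using Real.norm_exp_I_mul_ofReal_sub_one_le (x := u * y)

lemma measurable_levyKernel (u : ℝ) : Measurable (levyKernel u) :=
  Measurable.ite (measurableSet_singleton 0) measurable_const (by fun_prop)

lemma hasDerivAt_levyKernel (u y : ℝ) :
    HasDerivAt (fun u => levyKernel u y) (I * exp (u * y * I)) u := by
  rcases eq_or_ne y 0 with rfl | hy
  · simpa [levyKernel] using (hasDerivAt_id (u : ℂ)).comp_ofReal.const_mul I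
  · have hy' : (y : ℂ) ≠ 0 := by exact_mod_cast hy
    have h := (((hasDerivAt_id (u : ℂ)).comp_ofReal.mul_const ((y : ℂ) * I)).cexp.sub_const
      1).div_const (y : ℂ)
    have hfun :
        (fun v => levyKernel v y) = fun v : ℝ => (exp (id (v : ℂ) * (y * I)) - 1) / y := by
      ext v
      simp only [levyKernel, if_neg hy, id]
      ring_nf
    rw [hfun]
    refine h.congr_deriv ?_
    simp only [id_eq, one_mul, ← mul_assoc]
    field_simp

lemma hasDerivAt_integral_levyKernel (ν : Measure ℝ) [IsFiniteMeasure ν] (u : ℝ) :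
    HasDerivAt (fun u => ∫ y, levyKernel u y ∂ν) (I * charFun ν u) u := by
  have h := hasDerivAt_integral_of_dominated_loc_of_deriv_le (μ := ν) (x₀ := u)
    (bound := fun _ => 1) Filter.univ_mem
    (Filter.Eventually.of_forall fun v => (measurable_levyKernel v).aestronglyMeasurable)
    ((integrable_const |u|).mono' (measurable_levyKernel u).aestronglyMeasurable
      (ae_of_all _ (norm_levyKernel_le u)))
    (by fun_prop) (ae_of_all _ fun y v _ => by
      rw [norm_mul, norm_I, one_mul, ← ofReal_mul, norm_exp_ofReal_mul_I])
    (integrable_const 1) (ae_of_all _ fun y v _ => hasDerivAt_levyKernel v y)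
  rw [charFun_apply_real, ← integral_const_mul]
  exact h.2

lemma eq_exp_of_hasDerivAt {f g g' : ℝ → ℂ} (hf : ∀ t, HasDerivAt f (g' t * f t) t)
    (hg : ∀ t, HasDerivAt g (g' t) t) (h₀ : f 0 = exp (g 0)) (t : ℝ) : f t = exp (g t) := by
  have hconst : ∀ s, HasDerivAt (fun s => f s * exp (-g s)) 0 s := fun s => by
    refine ((hf s).mul (hg s).neg.cexp).congr_deriv ?_
    ring
  have := is_const_of_deriv_eq_zero (fun s => (hconst s).differentiableAt)
    (fun s => (hconst s).deriv) t 0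
  rw [h₀, ← exp_add, add_neg_cancel, exp_zero] at this
  calc f t = f t * exp (-g t) * exp (g t) := by
        rw [mul_assoc, ← exp_add, neg_add_cancel, exp_zero, mul_one]
    _ = exp (g t) := by rw [this, one_mul]

/-- If the size-biased measure of `μ` is `μ ∗ ν` with `ν` a nonnegative probability
measure, then the characteristic function of `μ` has the Lévy representation
`φ(u) = exp(a ∫_{[0,∞)} k(u,y) dν(y))`, i.e. with Lévy measure `a·ν`. -/
theorem levy_representation_of_sizeBias_indep_increment
    (μ : Measure ℝ) [IsProbabilityMeasure μ]
    (hsupp : μ (Set.Ici 0) = 1)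
    (hint : Integrable id μ)
    (ha : 0 < ∫ x, x ∂μ)
    (ν : Measure ℝ) [IsProbabilityMeasure ν] (hν : ν (Set.Ici 0) = 1)
    (hconv : sizeBiased μ = mconv μ ν) :
    ∀ u : ℝ, charFn μ u =
      Complex.exp (((∫ x, x ∂μ : ℝ) : ℂ) * ∫ y in Set.Ici (0 : ℝ), levyKernel u y ∂ν) := by
  set a := ∫ x, x ∂μ
  have hμ₀ : ∀ᵐ x ∂μ, 0 ≤ x := (mem_ae_iff_prob_eq_one measurableSet_Ici).mpr hsupp
  have hν₀ : ν.restrict (Set.Ici 0) = ν := Measure.restrict_eq_self_of_ae_mem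
    ((mem_ae_iff_prob_eq_one measurableSet_Ici).mpr hν)
  have hφ (t : ℝ) : HasDerivAt (charFun μ) (a * I * charFun ν t * charFun μ t) t := by
    refine (hasDerivAt_charFun_sizeBiased hμ₀ hint ha.ne' t).congr_deriv ?_
    rw [hconv, mconv_eq_conv, charFun_conv]
    ring
  have hG (t : ℝ) :
      HasDerivAt (fun t => a * ∫ y, levyKernel t y ∂ν) (a * I * charFun ν t) t := by
    simpa only [mul_assoc] using (hasDerivAt_integral_levyKernel ν t).const_mul (a : ℂ)
  intro u
  rw [hν₀, charFn_eq_charFun]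
  exact eq_exp_of_hasDerivAt hφ hG (by simp [levyKernel_zero_left]) u
end

section
/- Let I be an arbitrary index set and for each α ∈ I let μ_α be a probability measure on ℝ with μ_α([0,∞)) = 1 and mean a_α = ∫ x dμ_α(x) satisfying c ≤ a_α < ∞ for a fixed constant c > 0. Then the family {μ_α} is uniformly integrable (i.e., for every δ > 0 there exists L < ∞ such that ∫_{(L,∞)} x dμ_α(x) < δ for all α ∈ I) if and only if the family of size-biased measures {μ_α*} is tight (i.e., for every ε > 0 there exists L < ∞ such that μ_α*((L,∞)) < ε for all α ∈ I). -/
open MeasureTheory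

/-!
Since `μ*(L, ∞) = a⁻¹ ∫_{(L,∞)} x dμ`, tail bounds pass between the two families as soon as the
means `a` are bounded above and below. The lower bound `c` is given. Tightness supplies the upper
bound: if `μ*(L, ∞) < 1/2` for `L ≥ 0`, then `a ≤ L + ∫_{(L,∞)} x dμ < L + a/2`, so `a < 2L`.
-/

open Set

section SizeBiased

variable {μ : Measure ℝ}

lemma sizeBiased_apply (hint : Integrable id μ) (hnn : ∀ᵐ x ∂μ, 0 ≤ x)
    (ha : 0 ≤ ∫ x, x ∂μ) {s : Set ℝ} (hs : MeasurableSet s) :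
    sizeBiased μ s = ENNReal.ofReal ((∫ x in s, x ∂μ) / ∫ x, x ∂μ) := by
  rw [sizeBiased, withDensity_apply _ hs, ← integral_div]
  exact (ofReal_integral_eq_lintegral_ofReal (f := fun x => x / ∫ x, x ∂μ)
    (hint.restrict.div_const _) (ae_restrict_of_ae (hnn.mono fun x hx => div_nonneg hx ha))).symm

lemma sizeBiased_lt_ofReal_iff (hint : Integrable id μ) (hnn : ∀ᵐ x ∂μ, 0 ≤ x)
    (ha : 0 < ∫ x, x ∂μ) {s : Set ℝ} (hs : MeasurableSet s) {ε : ℝ} (hε : 0 < ε) :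
    sizeBiased μ s < ENNReal.ofReal ε ↔ ∫ x in s, x ∂μ < ε * ∫ x, x ∂μ := by
  rw [sizeBiased_apply hint hnn ha.le hs, ENNReal.ofReal_lt_ofReal_iff hε, div_lt_iff₀ ha]

lemma integral_le_max_add_setIntegral_Ioi [IsProbabilityMeasure μ] (hint : Integrable id μ)
    (L : ℝ) : ∫ x, x ∂μ ≤ max L 0 + ∫ x in Ioi L, x ∂μ := by
  have hsplit := integral_add_compl (measurableSet_Iic (a := L)) hint
  rw [compl_Iic] at hsplit
  have hlow : ∫ x in Iic L, x ∂μ ≤ max L 0 := calc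
    ∫ x in Iic L, x ∂μ ≤ ∫ _ in Iic L, max L 0 ∂μ :=
      setIntegral_mono_on hint.restrict (integrableOn_const (by finiteness)) measurableSet_Iic
        fun x hx => hx.out.trans (le_max_left L 0)
    _ = μ.real (Iic L) * max L 0 := by rw [setIntegral_const, smul_eq_mul]
    _ ≤ max L 0 := mul_le_of_le_one_left (le_max_right L 0) measureReal_le_one
  simp only [id] at hsplit
  linarith

lemma integral_lt_two_mul_of_sizeBiased_Ioi_lt_half [IsProbabilityMeasure μ]
    (hint : Integrable id μ) (hnn : ∀ᵐ x ∂μ, 0 ≤ x) (ha : 0 < ∫ x, x ∂μ) {L : ℝ}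
    (hL : sizeBiased μ (Ioi L) < ENNReal.ofReal (1 / 2)) :
    ∫ x, x ∂μ < 2 * max L 0 := by
  rw [sizeBiased_lt_ofReal_iff hint hnn ha measurableSet_Ioi one_half_pos] at hL
  linarith [integral_le_max_add_setIntegral_Ioi hint L]

end SizeBiased

/-- For a family of nonnegative probability measures with means bounded below by `c > 0`,
the family is uniformly integrable iff the family of size-biased measures is tight. -/
theorem uniformIntegrable_iff_sizeBiased_tight
    {I : Type*} (μ : I → Measure ℝ) (c : ℝ) (hc : 0 < c)
    (hprob : ∀ α, IsProbabilityMeasure (μ α))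
    (hsupp : ∀ α, μ α (Set.Ici 0) = 1)
    (hint : ∀ α, Integrable id (μ α))
    (hmean : ∀ α, c ≤ ∫ x, x ∂(μ α)) :
    (∀ δ : ℝ, 0 < δ → ∃ L : ℝ, ∀ α, ∫ x in Set.Ioi L, x ∂(μ α) < δ) ↔
    (∀ ε : ℝ, 0 < ε → ∃ L : ℝ, ∀ α, sizeBiased (μ α) (Set.Ioi L) < ENNReal.ofReal ε) := by
  have hpos α : 0 < ∫ x, x ∂(μ α) := hc.trans_le (hmean α)
  have hnn α : ∀ᵐ x ∂(μ α), 0 ≤ x :=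
    (ae_mem_iff_measure_eq measurableSet_Ici.nullMeasurableSet).2 (by rw [hsupp α, measure_univ])
  have tail_iff α L {ε : ℝ} (hε : 0 < ε) :=
    sizeBiased_lt_ofReal_iff (hint α) (hnn α) (hpos α) (measurableSet_Ioi (a := L)) hε
  constructor
  · intro hui ε hε
    obtain ⟨L, hL⟩ := hui (c * ε) (by positivity)
    refine ⟨L, fun α => (tail_iff α L hε).2 ((hL α).trans_le ?_)⟩
    rw [mul_comm c]
    gcongr
    exact hmean α
  · intro htight δ hδ
    obtain ⟨L₀, hL₀⟩ := htight (1 / 2) one_half_pos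
    obtain ⟨B, hBpos, hB⟩ : ∃ B > 0, ∀ α, ∫ x, x ∂(μ α) ≤ B := by
      refine ⟨2 * max L₀ 1, by positivity, fun α => ?_⟩
      have := integral_lt_two_mul_of_sizeBiased_Ioi_lt_half (hint α) (hnn α) (hpos α) (hL₀ α)
      linarith [max_le_max_left L₀ zero_le_one]
    obtain ⟨L, hL⟩ := htight (δ / B) (by positivity)
    refine ⟨L, fun α => ?_⟩
    calc ∫ x in Ioi L, x ∂(μ α) < δ / B * ∫ x, x ∂(μ α) := (tail_iff α L (by positivity)).1 (hL α)
      _ ≤ δ / B * B := by gcongr; exact hB α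
      _ = δ := div_mul_cancel₀ δ (by positivity)
end
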